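/- The dimension of the space of curl-free vector fields on ℝ^d with polynomial components of total degree at most ℓ−1 equals C(ℓ+d,d) − 1. -/

import Mathlib

open MvPolynomial

/-- The space of curl-free vector fields on ℝ^d whose components are polynomials of total
degree at most `ℓ − 1`. -/
noncomputable def curlFreePolyFields (d ℓ : ℕ) : Submodule ℝ (Fin d → MvPolynomial (Fin d) ℝ) where
  carrier := {v | (∀ i j : Fin d, pderiv i (v j) = pderiv j (v i)) ∧
    ∀ i : Fin d, (v i).totalDegree ≤ ℓ - 1}
  add_mem' := by
    intro a b ha hb
    refine ⟨fun i j => ?_, fun i => ?_⟩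
    · show pderiv i (a j + b j) = pderiv j (a i + b i)
      rw [map_add, map_add, ha.1 i j, hb.1 i j]
    · exact le_trans (totalDegree_add (a i) (b i)) (max_le (ha.2 i) (hb.2 i))
  zero_mem' := by
    refine ⟨fun i j => by simp, fun i => by simp⟩
  smul_mem' := by
    intro c a ha
    refine ⟨fun i j => ?_, fun i => ?_⟩
    · show pderiv i (c • a j) = pderiv j (c • a i)
      rw [Derivation.map_smul, Derivation.map_smul, ha.1 i j]
    · exact le_trans (totalDegree_smul_le c (a i)) (ha.2 i)

/-!
The gradient maps the polynomials of total degree `≤ ℓ` onto the curl-free fields of degree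
`≤ ℓ - 1`, and its kernel is the constants. For surjectivity, a curl-free field `v` whose
components are homogeneous of degree `k` has the potential `(k + 1)⁻¹ ∑ i, Xᵢ vᵢ`: by curl-freeness
and Euler's identity its `j`-th partial derivative is `vⱼ + k vⱼ`. A general curl-free field is the
sum of its homogeneous components, each of which is again curl-free. Rank–nullity then gives
`dim = C(ℓ + d, d) - 1`, the first term counting the monomials of degree `≤ ℓ` in `d` variables.
-/

namespace MvPolynomial

variable {σ R K : Type*}

section CommSemiring

variable [CommSemiring R]

variable (σ R) in
noncomputable def gradient : MvPolynomial σ R →ₗ[R] σ → MvPolynomial σ R :=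
  LinearMap.pi fun i => (pderiv i).toLinearMap

@[simp]
theorem gradient_apply (p : MvPolynomial σ R) (i : σ) : gradient σ R p i = pderiv i p := rfl

theorem pderiv_pderiv_comm (i j : σ) (p : MvPolynomial σ R) :
    pderiv i (pderiv j p) = pderiv j (pderiv i p) := by
  classical
  ext m
  simp only [coeff_pderiv, add_right_comm m (Finsupp.single i 1), Finsupp.add_apply,
    Finsupp.single_apply]
  by_cases h : i = j
  · subst h; rfl
  · simp only [h, Ne.symm h, if_false, add_zero]
    ring

theorem totalDegree_pderiv_le (i : σ) (p : MvPolynomial σ R) :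
    (pderiv i p).totalDegree ≤ p.totalDegree - 1 := by
  classical
  refine Finset.sup_le fun m hm => ?_
  rw [mem_support_iff, coeff_pderiv] at hm
  have hdeg := le_totalDegree (mem_support_iff.mpr (left_ne_zero_of_mul hm))
  change (m + Finsupp.single i 1).degree ≤ _ at hdeg
  rw [map_add, Finsupp.degree_single] at hdeg
  change m.degree ≤ _
  omega

theorem pderiv_homogeneousComponent_succ (i : σ) (k : ℕ) (p : MvPolynomial σ R) :
    pderiv i (homogeneousComponent (k + 1) p) = homogeneousComponent k (pderiv i p) := by
  ext m
  simp only [coeff_pderiv, coeff_homogeneousComponent, map_add, Finsupp.degree_single,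
    Nat.add_right_cancel_iff]
  split_ifs <;> simp

theorem sum_homogeneousComponent_of_totalDegree_le {p : MvPolynomial σ R} {n : ℕ}
    (h : p.totalDegree ≤ n) : ∑ k ∈ Finset.range (n + 1), homogeneousComponent k p = p := by
  rw [← Finset.sum_subset (Finset.range_subset_range.mpr (Nat.succ_le_succ h))
    fun k _ hk => homogeneousComponent_eq_zero k p (by simpa using hk)]
  exact sum_homogeneousComponent p

theorem pderiv_sum_X_mul_of_isHomogeneous [Fintype σ] {v : σ → MvPolynomial σ R} {k : ℕ}
    (hcurl : ∀ i j, pderiv i (v j) = pderiv j (v i)) (hv : ∀ i, (v i).IsHomogeneous k) (j : σ) :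
    pderiv j (∑ i, X i * v i) = (k + 1) • v j := by
  classical
  calc pderiv j (∑ i, X i * v i)
      = ∑ i, pderiv j (X i) * v i + ∑ i, X i * pderiv i (v j) := by
        simp only [map_sum, pderiv_mul, Finset.sum_add_distrib, hcurl j]
    _ = v j + k • v j := by
        rw [(hv j).sum_X_mul_pderiv]
        simp [pderiv_X, Pi.single_apply]
    _ = (k + 1) • v j := by rw [succ_nsmul, add_comm]

theorem eq_C_of_pderiv_eq_zero [NoZeroDivisors R] [CharZero R] {p : MvPolynomial σ R}
    (h : ∀ i, pderiv i p = 0) : p = C (coeff 0 p) := by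
  classical
  ext m
  rw [coeff_C]
  split_ifs with hm
  · rw [hm]
  obtain ⟨i, hi⟩ : ∃ i, m i ≠ 0 := by
    by_contra! h0
    exact hm (Finsupp.ext h0).symm
  obtain ⟨m, rfl⟩ : ∃ m', m = m' + Finsupp.single i 1 :=
    ⟨m - Finsupp.single i 1, (tsub_add_cancel_of_le
      (Finsupp.single_le_iff.mpr (Nat.one_le_iff_ne_zero.mpr hi))).symm⟩
  have hcoeff := coeff_pderiv (i := i) p m
  rw [h i, coeff_zero] at hcoeff
  exact (mul_eq_zero.mp hcoeff.symm).resolve_right (Nat.cast_add_one_ne_zero _)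

theorem ker_gradient [NoZeroDivisors R] [CharZero R] :
    LinearMap.ker (gradient σ R) = R ∙ 1 := by
  refine le_antisymm (fun p hp => ?_) ((Submodule.span_singleton_le_iff_mem _ _).mpr ?_)
  · have hconst := eq_C_of_pderiv_eq_zero fun i => congr_fun (LinearMap.mem_ker.mp hp) i
    exact Submodule.mem_span_singleton.mpr ⟨coeff 0 p, by rw [smul_eq_C_mul, mul_one, ← hconst]⟩
  · rw [LinearMap.mem_ker]
    ext i : 1
    exact pderiv_one

theorem finrank_restrictTotalDegree [Fintype σ] [StrongRankCondition R] (n : ℕ) :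
    Module.finrank R (restrictTotalDegree σ R n) =
      (n + Fintype.card σ).choose (Fintype.card σ) := by
  classical
  have hset : {m : σ →₀ ℕ | (m.sum fun _ e => e) ≤ n} =
      ↑((Finset.range (n + 1)).biUnion fun k => (Finset.univ : Finset σ).finsuppAntidiag k) := by
    ext m
    simp only [Set.mem_ofPred_eq, Finset.coe_biUnion, Finset.coe_range, Set.mem_iUnion,
      Finset.mem_coe, Finset.mem_finsuppAntidiag, Finset.subset_univ, and_true, Set.mem_Iio,
      exists_prop, exists_eq_right', Nat.lt_succ_iff, ← Finsupp.degree_eq_sum]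
    rfl
  have hdisj : (↑(Finset.range (n + 1)) : Set ℕ).PairwiseDisjoint
      fun k => (Finset.univ : Finset σ).finsuppAntidiag k := fun k _ l _ hkl =>
    Finset.disjoint_left.mpr fun m hk hl => hkl <| by
      rw [Finset.mem_finsuppAntidiag] at hk hl
      rw [← hk.1, hl.1]
  rw [restrictTotalDegree, Module.finrank_eq_nat_card_basis (basisRestrictSupport R _), hset,
    Nat.card_coe_set_eq, Set.ncard_coe_finset, Finset.card_biUnion hdisj]
  simp_rw [Finset.card_finsuppAntidiag_nat_eq_multichoose, Finset.card_univ]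
  exact Nat.sum_range_multichoose n _

end CommSemiring

section Field

variable [Field K] [CharZero K]

theorem finrank_map_gradient {P : Submodule K (MvPolynomial σ K)} [FiniteDimensional K P]
    (h1 : (1 : MvPolynomial σ K) ∈ P) :
    Module.finrank K (P.map (gradient σ K)) = Module.finrank K P - 1 := by
  have hker : Module.finrank K (LinearMap.ker ((gradient σ K).domRestrict P)) = 1 := by
    rw [LinearMap.ker_domRestrict, ker_gradient,
      LinearEquiv.finrank_eq (Submodule.comapSubtypeEquivOfLe
        ((Submodule.span_singleton_le_iff_mem _ _).mpr h1)),
      finrank_span_singleton one_ne_zero]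
  have hrank := LinearMap.finrank_range_add_finrank_ker ((gradient σ K).domRestrict P)
  rw [LinearMap.range_domRestrict, hker] at hrank
  omega

theorem mem_map_gradient_of_isHomogeneous [Fintype σ] {v : σ → MvPolynomial σ K} {k n : ℕ}
    (hkn : k ≤ n) (hcurl : ∀ i j, pderiv i (v j) = pderiv j (v i))
    (hv : ∀ i, (v i).IsHomogeneous k) :
    v ∈ (restrictTotalDegree σ K (n + 1)).map (gradient σ K) := by
  refine ⟨(k + 1 : K)⁻¹ • ∑ i, X i * v i, Submodule.smul_mem _ _ ?_, ?_⟩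
  · rw [mem_restrictTotalDegree]
    have hhom : (∑ i, X i * v i).IsHomogeneous (1 + k) :=
      IsHomogeneous.sum _ _ _ fun i _ => (isHomogeneous_X K i).mul (hv i)
    exact hhom.totalDegree_le.trans (by omega)
  · ext j : 1
    rw [gradient_apply, (pderiv j).map_smul, pderiv_sum_X_mul_of_isHomogeneous hcurl hv,
      ← Nat.cast_smul_eq_nsmul K, smul_smul, Nat.cast_add_one,
      inv_mul_cancel₀ (Nat.cast_add_one_ne_zero k), one_smul]

theorem mem_map_gradient_restrictTotalDegree_iff [Fintype σ] {v : σ → MvPolynomial σ K}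
    {n : ℕ} :
    v ∈ (restrictTotalDegree σ K (n + 1)).map (gradient σ K) ↔
      (∀ i j, pderiv i (v j) = pderiv j (v i)) ∧ ∀ i, (v i).totalDegree ≤ n := by
  constructor
  · rintro ⟨p, hp, rfl⟩
    rw [SetLike.mem_coe, mem_restrictTotalDegree] at hp
    exact ⟨fun i j => pderiv_pderiv_comm i j p,
      fun i => (totalDegree_pderiv_le i p).trans (by omega)⟩
  · rintro ⟨hcurl, hdeg⟩
    have hsum : v = ∑ k ∈ Finset.range (n + 1), fun i => homogeneousComponent k (v i) := by
      funext i
      rw [Finset.sum_apply, sum_homogeneousComponent_of_totalDegree_le (hdeg i)]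
    rw [hsum]
    refine Submodule.sum_mem _ fun k hk => mem_map_gradient_of_isHomogeneous
      (Nat.lt_succ_iff.mp (Finset.mem_range.mp hk)) (fun i j => ?_)
      fun i => homogeneousComponent_isHomogeneous k (v i)
    cases k with
    | zero => simp only [homogeneousComponent_zero, pderiv_C]
    | succ k =>
      rw [pderiv_homogeneousComponent_succ, pderiv_homogeneousComponent_succ, hcurl i j]

end Field

end MvPolynomial

/-- The dimension of the space of curl-free polynomial vector fields of total degree at
most `ℓ − 1` on ℝ^d equals `C(ℓ+d, d) − 1`. -/
theorem finrank_curlFreePolyFields (d ℓ : ℕ) (hℓ : 1 ≤ ℓ) :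
    Module.finrank ℝ (curlFreePolyFields d ℓ) = Nat.choose (ℓ + d) d - 1 := by
  obtain ⟨n, rfl⟩ := Nat.exists_eq_add_of_le' hℓ
  have hspace : curlFreePolyFields d (n + 1) =
      (restrictTotalDegree (Fin d) ℝ (n + 1)).map (gradient (Fin d) ℝ) := by
    ext v
    exact mem_map_gradient_restrictTotalDegree_iff.symm
  have hone : (1 : MvPolynomial (Fin d) ℝ) ∈ restrictTotalDegree (Fin d) ℝ (n + 1) := by
    simp [mem_restrictTotalDegree]
  rw [hspace, finrank_map_gradient hone, finrank_restrictTotalDegree, Fintype.card_fin]
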